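/- There exist two simple graphs on vertex set Fin 10 that are not isomorphic but have the same bivariate permanent polynomial. -/

import Mathlib

open scoped Classical

/-- The permanent of a square matrix: `per(M) = ∑_σ ∏_i M i (σ i)`. -/
noncomputable def permanent {n : Type*} [DecidableEq n] [Fintype n] {R : Type*} [CommRing R]
    (M : Matrix n n R) : R :=
  ∑ σ : Equiv.Perm n, ∏ i, M i (σ i)

/-- The bivariate permanent polynomial of a simple graph `G` on `Fin n`:
`P(G; x, λ) = per(x • Iₙ + λ • A(G) + A(Ḡ))`, as an element of `ℤ[x, λ]`
(realized as `MvPolynomial (Fin 2) ℤ`, with `X 0 = x` and `X 1 = λ`). -/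
noncomputable def bivPermPoly {n : ℕ} (G : SimpleGraph (Fin n)) : MvPolynomial (Fin 2) ℤ :=
  permanent
    ((MvPolynomial.X 0 : MvPolynomial (Fin 2) ℤ) • (1 : Matrix (Fin n) (Fin n) (MvPolynomial (Fin 2) ℤ))
      + (MvPolynomial.X 1 : MvPolynomial (Fin 2) ℤ) • G.adjMatrix (MvPolynomial (Fin 2) ℤ)
      + Gᶜ.adjMatrix (MvPolynomial (Fin 2) ℤ))

/-!
The bivariate permanent polynomial of `G` is the generating function `∑_σ x ^ fix σ * λ ^ e σ`
of the permutations `σ` by their number of fixed points and the number `e σ` of points `i` with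
`σ i` adjacent to `i`; so it is determined by the multiset of these pairs. Both entries are at most
`n`, and there are `n! < B` permutations, so that multiset can be read off in base `B` from the
single integer `P(G; B ^ (n + 1), B)` (Kronecker substitution). For `G₁₀` and `H₁₀` this
integer is evaluated by Ryser's formula, with `2 ^ 10` terms instead of `10!`, and the values
agree. The graphs are not isomorphic: `H₁₀` has two triangles sharing an edge, `G₁₀` does not.
-/

open Finset

section Permanent

variable {n : Type*} [DecidableEq n] [Fintype n] {R : Type*} [CommRing R]

theorem permanent_map {S : Type*} [CommRing S] (f : R →+* S) (M : Matrix n n R) :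
    f (permanent M) = permanent (M.map f) := by
  simp [permanent, map_sum, map_prod]

theorem sum_perm_eq_sum_surjective {M : Type*} [AddCommMonoid M] (F : (n → n) → M) :
    ∑ σ : Equiv.Perm n, F σ = ∑ g ∈ univ.filter Function.Surjective, F g := by
  refine sum_bij (fun σ _ => ⇑σ) (fun σ _ => by simpa using σ.surjective)
    (fun σ _ τ _ h => Equiv.coe_fn_injective h) (fun g hg => ?_) (fun _ _ => rfl)
  have hg : g.Bijective := Finite.surjective_iff_bijective.mp (mem_filter.mp hg).2
  exact ⟨Equiv.ofBijective g hg, mem_univ _, rfl⟩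

theorem permanent_eq_sum_powerset (M : Matrix n n R) :
    permanent M = ∑ t ∈ (univ : Finset n).powerset, (-1) ^ #t * ∏ i, ∑ j ∈ tᶜ, M i j := by
  let avoiding (j : n) : Finset (n → n) := univ.filter fun g => ∀ i, g i ≠ j
  have h_surj : univ.inf (fun j => (avoiding j)ᶜ) = univ.filter Function.Surjective := by
    ext g
    simp [avoiding, Finset.mem_inf, Function.Surjective]
  have h_avoid (t : Finset n) : t.inf avoiding = Fintype.piFinset fun _ => tᶜ := by
    ext g
    simp only [avoiding, Finset.mem_inf, mem_filter, mem_univ, true_and, Fintype.mem_piFinset,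
      mem_compl]
    exact ⟨fun h i hi => h _ hi i rfl, fun h j hj i hij => h i (hij ▸ hj)⟩
  calc permanent M = ∑ g ∈ univ.filter Function.Surjective, ∏ i, M i (g i) :=
        sum_perm_eq_sum_surjective fun g => ∏ i, M i (g i)
    _ = ∑ t ∈ (univ : Finset n).powerset, (-1) ^ #t • ∑ g ∈ t.inf avoiding, ∏ i, M i (g i) := by
        rw [← h_surj]
        exact inclusion_exclusion_sum_inf_compl _ _ _
    _ = _ := by
        refine sum_congr rfl fun t _ => ?_
        rw [h_avoid, zsmul_eq_mul]
        push_cast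
        exact congrArg _ (prod_univ_sum _ fun i j => M i j).symm

end Permanent

section GraphPermanent

variable {V : Type*} [Fintype V] [DecidableEq V] (G : SimpleGraph V) [DecidableRel G.Adj]
  {R : Type*} [CommRing R]

theorem permanent_ite_adj (x y : R) :
    permanent (Matrix.of fun i j => if i = j then x else if G.Adj i j then y else 1 :
        Matrix V V R) =
      ∑ σ : Equiv.Perm V, x ^ #{i | σ i = i} * y ^ #{i | G.Adj i (σ i)} := by
  refine sum_congr rfl fun σ _ => ?_
  have h_entry (i : V) : (if i = σ i then x else if G.Adj i (σ i) then y else 1) =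
      (if σ i = i then x else 1) * (if G.Adj i (σ i) then y else 1) := by
    by_cases hi : σ i = i
    · simp [hi]
    · simp [hi, Ne.symm hi]
  simp only [Matrix.of_apply, h_entry, prod_mul_distrib, prod_ite, prod_const, one_pow, mul_one]

end GraphPermanent

section BivPermPoly

open MvPolynomial

variable {n : ℕ} (G : SimpleGraph (Fin n)) [DecidableRel G.Adj]

theorem aeval_bivPermPoly {R : Type*} [CommRing R] (x y : R) :
    aeval ![x, y] (bivPermPoly G) =
      permanent (Matrix.of fun i j => if i = j then x else if G.Adj i j then y else 1 :
        Matrix _ _ R) := by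
  rw [bivPermPoly, ← AlgHom.coe_toRingHom, permanent_map]
  congr 1
  ext i j
  by_cases hij : i = j
  · subst hij
    simp
  · by_cases hadj : G.Adj i j <;> simp [hij, hadj]

theorem bivPermPoly_eq_sum :
    bivPermPoly G =
      ∑ σ : Equiv.Perm (Fin n), X 0 ^ #{i | σ i = i} * X 1 ^ #{i | G.Adj i (σ i)} := by
  have h_id : (![X 0, X 1] : Fin 2 → MvPolynomial (Fin 2) ℤ) = X := by
    ext i : 1
    fin_cases i <;> rfl
  rw [← permanent_ite_adj, ← aeval_bivPermPoly, h_id]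
  exact (aeval_X_left_apply _).symm

end BivPermPoly

theorem Nat.ofDigits_map_range (b : ℕ) (c : ℕ → ℕ) (N : ℕ) :
    Nat.ofDigits b ((List.range N).map c) = ∑ k ∈ range N, c k * b ^ k := by
  induction N with
  | zero => simp
  | succ N ih =>
    rw [List.range_succ, List.map_append, Nat.ofDigits_append, ih, sum_range_succ]
    simp [mul_comm]

theorem Multiset.eq_of_sum_map_pow_eq {B : ℕ} {s t : Multiset ℕ} (hs : card s < B)
    (ht : card t < B) (h : (s.map (B ^ ·)).sum = (t.map (B ^ ·)).sum) : s = t := by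
  obtain hB | hB : B ≤ 1 ∨ 1 < B := by omega
  · rw [card_eq_zero.mp (show card s = 0 by omega), card_eq_zero.mp (show card t = 0 by omega)]
  set N := (s + t).sum + 1
  have h_lt (k : ℕ) (hk : k ∈ s + t) : k < N := Nat.lt_succ_of_le (le_sum_of_mem hk)
  have h_expand (u : Multiset ℕ) (hu : ∀ k ∈ u, k < N) :
      (u.map (B ^ ·)).sum = Nat.ofDigits B ((List.range N).map (u.count ·)) := by
    rw [Nat.ofDigits_map_range, Finset.sum_multiset_map_count]
    refine sum_subset (fun k hk => Finset.mem_range.2 (hu k (mem_toFinset.1 hk))) ?_ |>.trans ?_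
    · intro k _ hk
      simp [count_eq_zero.2 (mt mem_toFinset.2 hk)]
    · simp [smul_eq_mul]
  have h_digit (u : Multiset ℕ) (hu : card u < B) (d : ℕ)
      (hd : d ∈ (List.range N).map (u.count ·)) : d < B := by
    obtain ⟨k, -, rfl⟩ := List.mem_map.1 hd
    exact (count_le_card k u).trans_lt hu
  have h_counts := Nat.ofDigits_inj_of_len_eq hB (by simp) (h_digit s hs) (h_digit t ht)
    (by rw [← h_expand s fun k hk => h_lt k (mem_add.2 (.inl hk)),
      ← h_expand t fun k hk => h_lt k (mem_add.2 (.inr hk)), h])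
  ext k
  by_cases hk : k < N
  · exact List.map_inj_left.1 h_counts k (List.mem_range.2 hk)
  · have h_notMem (u : Multiset ℕ) (hu : u ≤ s + t) : count k u = 0 :=
      count_eq_zero.2 fun hku => hk (h_lt k (mem_of_le hu hku))
    rw [h_notMem s (le_add_right _ _), h_notMem t (le_add_left _ _)]

section PermStats

open MvPolynomial Nat

variable {n : ℕ} (G : SimpleGraph (Fin n)) [DecidableRel G.Adj]

def permStats : Multiset (ℕ × ℕ) :=
  univ.val.map fun σ : Equiv.Perm (Fin n) => (#{i | σ i = i}, #{i | G.Adj i (σ i)})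

theorem bivPermPoly_eq_sum_permStats :
    bivPermPoly G = ((permStats G).map fun p => X 0 ^ p.1 * X 1 ^ p.2).sum := by
  rw [bivPermPoly_eq_sum, permStats, Multiset.map_map]
  rfl

theorem aeval_bivPermPoly_kronecker (B : ℕ) :
    aeval ![(B : ℤ) ^ (n + 1), (B : ℤ)] (bivPermPoly G) =
      (((permStats G).map fun p => (n + 1) * p.1 + p.2).map (B ^ ·)).sum := by
  rw [bivPermPoly_eq_sum_permStats, map_multiset_sum, Nat.cast_multiset_sum, Multiset.map_map,
    Multiset.map_map, Multiset.map_map]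
  congr 1
  refine Multiset.map_congr rfl fun p _ => ?_
  simp [pow_add, pow_mul]

theorem permStats_map_kronecker :
    (((permStats G).map fun p => (n + 1) * p.1 + p.2).map fun k => (k / (n + 1), k % (n + 1))) =
      permStats G := by
  rw [Multiset.map_map]
  refine (Multiset.map_congr rfl fun p hp => ?_).trans (Multiset.map_id _)
  obtain ⟨σ, -, rfl⟩ := Multiset.mem_map.1 hp
  have h_lt : #{i | G.Adj i (σ i)} < n + 1 :=
    Nat.lt_succ_of_le ((card_filter_le _ _).trans_eq (card_fin n))
  simp only [Function.comp_apply, id]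
  rw [Nat.mul_add_div (Nat.succ_pos n), Nat.div_eq_of_lt h_lt, Nat.mul_add_mod,
    Nat.mod_eq_of_lt h_lt, add_zero]

theorem bivPermPoly_eq_of_aeval_kronecker_eq {G H : SimpleGraph (Fin n)} [DecidableRel G.Adj]
    [DecidableRel H.Adj] {B : ℕ} (hB : n ! < B)
    (h : aeval ![(B : ℤ) ^ (n + 1), (B : ℤ)] (bivPermPoly G) =
      aeval ![(B : ℤ) ^ (n + 1), (B : ℤ)] (bivPermPoly H)) :
    bivPermPoly G = bivPermPoly H := by
  have h_card (G : SimpleGraph (Fin n)) [DecidableRel G.Adj] :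
      Multiset.card ((permStats G).map fun p => (n + 1) * p.1 + p.2) < B := by
    simpa [permStats, Fintype.card_perm] using hB
  rw [aeval_bivPermPoly_kronecker, aeval_bivPermPoly_kronecker, Nat.cast_inj] at h
  have h_stats : permStats G = permStats H := by
    rw [← permStats_map_kronecker G, ← permStats_map_kronecker H,
      Multiset.eq_of_sum_map_pow_eq (h_card G) (h_card H) h]
  rw [bivPermPoly_eq_sum_permStats, bivPermPoly_eq_sum_permStats, h_stats]

end PermStats

namespace SimpleGraph

variable {V W : Type*}

def HasDiamond (G : SimpleGraph V) : Prop :=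
  ∃ a b c d, G.Adj a b ∧ G.Adj a c ∧ G.Adj a d ∧ G.Adj b c ∧ G.Adj b d ∧ c ≠ d

theorem HasDiamond.map {G : SimpleGraph V} {H : SimpleGraph W} (f : G ↪g H) :
    G.HasDiamond → H.HasDiamond := by
  rintro ⟨a, b, c, d, hab, hac, had, hbc, hbd, hcd⟩
  exact ⟨f a, f b, f c, f d, f.map_adj_iff.2 hab, f.map_adj_iff.2 hac, f.map_adj_iff.2 had,
    f.map_adj_iff.2 hbc, f.map_adj_iff.2 hbd, f.injective.ne hcd⟩

end SimpleGraph

def G₁₀ : SimpleGraph (Fin 10) := .fromRel fun a b => (a, b) ∈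
  [(0, 1), (0, 2), (0, 3), (0, 4), (1, 2), (1, 5), (2, 6), (3, 4), (3, 5), (4, 7), (6, 8), (7, 8)]

def H₁₀ : SimpleGraph (Fin 10) := .fromRel fun a b => (a, b) ∈
  [(0, 1), (0, 2), (0, 3), (0, 4), (1, 2), (1, 3), (2, 5), (3, 6), (4, 7), (4, 8), (5, 7), (6, 8)]

instance : DecidableRel G₁₀.Adj := inferInstanceAs (DecidableRel (SimpleGraph.fromRel _).Adj)

instance : DecidableRel H₁₀.Adj := inferInstanceAs (DecidableRel (SimpleGraph.fromRel _).Adj)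

theorem G₁₀_not_hasDiamond : ¬ G₁₀.HasDiamond := by
  unfold SimpleGraph.HasDiamond
  decide +kernel

theorem H₁₀_hasDiamond : H₁₀.HasDiamond := ⟨0, 1, 2, 3, by decide⟩

theorem aeval_bivPermPoly_G₁₀_eq_H₁₀ :
    MvPolynomial.aeval ![((2 ^ 22 : ℕ) : ℤ) ^ (10 + 1), ((2 ^ 22 : ℕ) : ℤ)] (bivPermPoly G₁₀) =
      MvPolynomial.aeval ![((2 ^ 22 : ℕ) : ℤ) ^ (10 + 1), ((2 ^ 22 : ℕ) : ℤ)]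
        (bivPermPoly H₁₀) := by
  rw [aeval_bivPermPoly, aeval_bivPermPoly, permanent_eq_sum_powerset, permanent_eq_sum_powerset]
  decide +kernel

/-- There exist two non-isomorphic simple graphs on 10 vertices with the same
bivariate permanent polynomial. -/
theorem exists_copermanent_nonisomorphic_on_ten_vertices :
    ∃ G H : SimpleGraph (Fin 10),
      ¬ Nonempty (G ≃g H) ∧ bivPermPoly G = bivPermPoly H :=
  ⟨G₁₀, H₁₀, fun ⟨φ⟩ => G₁₀_not_hasDiamond (H₁₀_hasDiamond.map φ.symm.toEmbedding),
    bivPermPoly_eq_of_aeval_kronecker_eq (by decide) aeval_bivPermPoly_G₁₀_eq_H₁₀⟩
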